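/- Let 1 < τ < ∞, τ ≠ 2, and set σ = |τ-2|/(2τ). Define λ_0 = 0 and λ_{±k} = (-1)^k k^{-σ} for k ∈ ℕ. Then: (a) the restriction of λ to each dyadic block δ_k has ℓ_{2τ/|2-τ|, ∞} norm bounded by an absolute constant; but (b) sup_{n∈ℕ₀} Σ_{k=2^n}^{2^{n+1}-1} |λ_k - λ_{k-1}| = ∞. -/

import Mathlib

/-! On `δ_k` the sequence `λ` is supported on at most `4 · 2^k` points, where `|λ_j| ≤ 2^{-kσ}`,
so `n^σ λ*_n ≤ (4 · 2^k)^σ 2^{-kσ} = 4^σ` for every `n`. Consecutive terms have opposite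
signs, so `|λ_j - λ_{j-1}| = j^{-σ} + (j-1)^{-σ} ≥ 2^{-(n+1)σ}` for `2^n ≤ j < 2^{n+1}`; the
`n`-th block sum is therefore at least `2^{-σ} (2^{1-σ})^n`, which tends to infinity because
`σ < 1`. -/

open MeasureTheory ENNReal

/-- Non-increasing rearrangement of a real sequence on `ℤ`, for `n ≥ 1`. -/
noncomputable def srearr (a : ℤ → ℝ) (n : ℕ) : ℝ≥0∞ :=
  sInf {σ : ℝ≥0∞ | Measure.count {j : ℤ | σ < ENNReal.ofReal |a j|} < n}

/-- The dyadic block `δ_k = {-2^{k+1}+1,...,-2^k} ∪ {2^k,...,2^{k+1}-1}` for `k ≥ 1`,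
and `δ₀ = {-1,0,1}`. -/
noncomputable def dyadicBlock (k : ℕ) : Finset ℤ :=
  if k = 0 then Finset.Icc (-1) 1
  else Finset.Icc (-(2 : ℤ) ^ (k + 1) + 1) (-(2 : ℤ) ^ k) ∪
    Finset.Icc ((2 : ℤ) ^ k) (2 ^ (k + 1) - 1)

lemma srearr_le_ofReal {a : ℤ → ℝ} {M : ℝ} (hM : ∀ j, |a j| ≤ M) {n : ℕ} (hn : 1 ≤ n) :
    srearr a n ≤ ENNReal.ofReal M := by
  apply sInf_le
  have hempty : {j : ℤ | ENNReal.ofReal M < ENNReal.ofReal |a j|} = ∅ :=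
    Set.eq_empty_of_forall_notMem fun j hj => (ENNReal.ofReal_le_ofReal (hM j)).not_gt hj
  simp only [Set.mem_ofPred_eq, hempty, measure_empty]
  exact_mod_cast hn

lemma srearr_eq_zero_of_card_lt {a : ℤ → ℝ} {s : Finset ℤ} (hs : ∀ j, a j ≠ 0 → j ∈ s) {n : ℕ}
    (hn : s.card < n) : srearr a n = 0 := by
  refine le_antisymm (sInf_le ?_) zero_le
  have hsub : {j : ℤ | (0 : ℝ≥0∞) < ENNReal.ofReal |a j|} ⊆ s := by
    intro j hj
    simp only [Set.mem_ofPred_eq, ENNReal.ofReal_pos, abs_pos] at hj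
    exact hs j hj
  calc Measure.count {j : ℤ | (0 : ℝ≥0∞) < ENNReal.ofReal |a j|}
      ≤ Measure.count (s : Set ℤ) := measure_mono hsub
    _ = s.card := Measure.count_apply_finset s
    _ < n := by exact_mod_cast hn

theorem iSup_rpow_mul_srearr_le {a : ℤ → ℝ} {s : Finset ℤ} (hs : ∀ j, a j ≠ 0 → j ∈ s)
    {N M : ℝ} (hN : (s.card : ℝ) ≤ N) (hM : ∀ j, |a j| ≤ M) {p : ℝ} (hp : 0 ≤ p) :
    ⨆ (n : ℕ) (_ : 1 ≤ n), (n : ℝ≥0∞) ^ p * srearr a n ≤ ENNReal.ofReal (N ^ p * M) := by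
  refine iSup₂_le fun n hn => ?_
  by_cases hns : n ≤ s.card
  · have hnN : (n : ℝ) ≤ N := le_trans (by exact_mod_cast hns) hN
    have hpow : (n : ℝ≥0∞) ^ p ≤ ENNReal.ofReal (N ^ p) := by
      rw [← ENNReal.ofReal_natCast, ENNReal.ofReal_rpow_of_nonneg n.cast_nonneg hp]
      exact ENNReal.ofReal_le_ofReal (Real.rpow_le_rpow n.cast_nonneg hnN hp)
    rw [ENNReal.ofReal_mul (Real.rpow_nonneg (n.cast_nonneg.trans hnN) p)]
    exact mul_le_mul' hpow (srearr_le_ofReal hM hn)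
  · rw [srearr_eq_zero_of_card_lt hs (by omega), mul_zero]
    exact zero_le

lemma card_dyadicBlock_le (k : ℕ) : ((dyadicBlock k).card : ℝ) ≤ 4 * 2 ^ k := by
  suffices h : (dyadicBlock k).card ≤ 4 * 2 ^ k by exact_mod_cast h
  have h2k : (0 : ℤ) < 2 ^ k := by positivity
  unfold dyadicBlock
  split_ifs with hk
  · subst hk; simp
  · refine (Finset.card_union_le _ _).trans ?_
    rw [Int.card_Icc, Int.card_Icc, pow_succ]
    zify [Int.toNat_of_nonneg]
    omega

lemma eq_zero_or_two_pow_le_natAbs_of_mem_dyadicBlock {k : ℕ} {j : ℤ} (hj : j ∈ dyadicBlock k) :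
    j = 0 ∨ 2 ^ k ≤ j.natAbs := by
  unfold dyadicBlock at hj
  split_ifs at hj with hk
  · subst hk
    simp only [Finset.mem_Icc] at hj
    omega
  · rw [Finset.mem_union, Finset.mem_Icc, Finset.mem_Icc, pow_succ] at hj
    have h2k : ((2 ^ k : ℕ) : ℤ) = (2 : ℤ) ^ k := by push_cast; ring
    omega

lemma card_Icc_two_pow (n : ℕ) : (Finset.Icc ((2 : ℤ) ^ n) (2 ^ (n + 1) - 1)).card = 2 ^ n := by
  rw [Int.card_Icc, pow_succ, show (2 : ℤ) ^ n * 2 - 1 + 1 - 2 ^ n = 2 ^ n by ring]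
  exact_mod_cast Int.toNat_natCast (2 ^ n)

/-- At `j = 0` this is `0 ^ (-σ)`, which is `0` only when `σ ≠ 0`. -/
noncomputable def alternatingPowerSeq (σ : ℝ) (j : ℤ) : ℝ :=
  (-1) ^ j.natAbs * (j.natAbs : ℝ) ^ (-σ)

open Filter

namespace alternatingPowerSeq

variable {σ : ℝ}

lemma eq_of_natCast (hσ : σ ≠ 0) {f : ℤ → ℝ} (h0 : f 0 = 0)
    (hval : ∀ k : ℕ, 1 ≤ k →
      f k = (-1 : ℝ) ^ k * (k : ℝ) ^ (-σ) ∧ f (-(k : ℤ)) = (-1 : ℝ) ^ k * (k : ℝ) ^ (-σ)) :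
    f = alternatingPowerSeq σ := by
  funext j
  obtain ⟨k, hj⟩ := Int.eq_nat_or_neg j
  rcases Nat.eq_zero_or_pos k with rfl | hk
  · obtain rfl : j = 0 := by omega
    rw [h0, alternatingPowerSeq, Int.natAbs_zero, Nat.cast_zero,
      Real.zero_rpow (neg_ne_zero.mpr hσ), mul_zero]
  · rcases hj with rfl | rfl <;> simp [alternatingPowerSeq, hval k hk]

lemma abs_eq (σ : ℝ) (j : ℤ) : |alternatingPowerSeq σ j| = (j.natAbs : ℝ) ^ (-σ) := by
  rw [alternatingPowerSeq, abs_mul, abs_pow, abs_neg, abs_one, one_pow, one_mul,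
    abs_of_nonneg (Real.rpow_nonneg j.natAbs.cast_nonneg _)]

lemma abs_le_of_mem_dyadicBlock (hσ : 0 < σ) {k : ℕ} {j : ℤ} (hj : j ∈ dyadicBlock k) :
    |alternatingPowerSeq σ j| ≤ ((2 : ℝ) ^ k) ^ (-σ) := by
  rw [abs_eq]
  rcases eq_zero_or_two_pow_le_natAbs_of_mem_dyadicBlock hj with rfl | hjk
  · rw [Int.natAbs_zero, Nat.cast_zero, Real.zero_rpow (neg_ne_zero.mpr hσ.ne')]
    positivity
  · exact Real.rpow_le_rpow_of_nonpos (by positivity) (by exact_mod_cast hjk) (by linarith)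

theorem iSup_rpow_mul_srearr_dyadicBlock_le (hσ : 0 < σ) (k : ℕ) :
    ⨆ (n : ℕ) (_ : 1 ≤ n), (n : ℝ≥0∞) ^ σ *
        srearr (fun m => if m ∈ dyadicBlock k then alternatingPowerSeq σ m else 0) n ≤
      ENNReal.ofReal (4 ^ σ) := by
  have hsupp : ∀ j, (if j ∈ dyadicBlock k then alternatingPowerSeq σ j else 0) ≠ 0 →
      j ∈ dyadicBlock k := fun j hj => by_contra fun hjk => hj (if_neg hjk)
  have hbound : ∀ j, |if j ∈ dyadicBlock k then alternatingPowerSeq σ j else 0| ≤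
      ((2 : ℝ) ^ k) ^ (-σ) := fun j => by
    split_ifs with hjk
    · exact abs_le_of_mem_dyadicBlock hσ hjk
    · rw [abs_zero]; positivity
  have h4 : ((4 : ℝ) * 2 ^ k) ^ σ * ((2 : ℝ) ^ k) ^ (-σ) = 4 ^ σ := by
    rw [Real.mul_rpow (by norm_num) (by positivity), mul_assoc,
      ← Real.rpow_add (by positivity), add_neg_cancel, Real.rpow_zero, mul_one]
  rw [← h4]
  exact iSup_rpow_mul_srearr_le hsupp (card_dyadicBlock_le k) hbound hσ.le

lemma abs_sub_pred (σ : ℝ) {j : ℤ} (hj : 1 ≤ j) :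
    |alternatingPowerSeq σ j - alternatingPowerSeq σ (j - 1)| =
      (j.natAbs : ℝ) ^ (-σ) + ((j - 1).natAbs : ℝ) ^ (-σ) := by
  have hsucc : j.natAbs = (j - 1).natAbs + 1 := by omega
  have hsign : (-1 : ℝ) ^ j.natAbs = -(-1) ^ (j - 1).natAbs := by rw [hsucc, pow_succ]; ring
  rw [alternatingPowerSeq, alternatingPowerSeq, hsign,
    show ∀ s x y : ℝ, -s * x - s * y = -(s * (x + y)) by intros; ring,
    abs_neg, abs_mul, abs_pow, abs_neg, abs_one, one_pow, one_mul, abs_of_nonneg (by positivity)]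

lemma rpow_neg_le_abs_sub_pred (hσ : 0 ≤ σ) {n : ℕ} {j : ℤ}
    (hj : j ∈ Finset.Icc ((2 : ℤ) ^ n) (2 ^ (n + 1) - 1)) :
    ((2 : ℝ) ^ (n + 1)) ^ (-σ) ≤ |alternatingPowerSeq σ j - alternatingPowerSeq σ (j - 1)| := by
  rw [Finset.mem_Icc] at hj
  have h1 : (1 : ℤ) ≤ j := (one_le_pow₀ (by norm_num)).trans hj.1
  have hj1 : (1 : ℝ) ≤ j.natAbs := by exact_mod_cast (by omega : 1 ≤ j.natAbs)
  have hj2 : (j.natAbs : ℝ) ≤ 2 ^ (n + 1) := by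
    rw [Nat.cast_natAbs, Int.cast_abs, abs_of_nonneg (by positivity)]
    exact_mod_cast (by linarith : j ≤ 2 ^ (n + 1))
  rw [abs_sub_pred σ h1]
  have := Real.rpow_le_rpow_of_nonpos (by positivity) hj2 (neg_nonpos.mpr hσ)
  have : (0 : ℝ) ≤ ((j - 1).natAbs : ℝ) ^ (-σ) := by positivity
  linarith

lemma two_pow_mul_rpow_neg_le_sum_abs_sub_pred (hσ : 0 ≤ σ) (n : ℕ) :
    (2 : ℝ) ^ n * ((2 : ℝ) ^ (n + 1)) ^ (-σ) ≤
      ∑ j ∈ Finset.Icc ((2 : ℤ) ^ n) (2 ^ (n + 1) - 1),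
        |alternatingPowerSeq σ j - alternatingPowerSeq σ (j - 1)| := by
  have := Finset.card_nsmul_le_sum (Finset.Icc ((2 : ℤ) ^ n) (2 ^ (n + 1) - 1)) _ _
    fun j hj => rpow_neg_le_abs_sub_pred hσ hj
  rwa [card_Icc_two_pow, nsmul_eq_mul, Nat.cast_pow, Nat.cast_ofNat] at this

lemma tendsto_two_pow_mul_rpow_neg (hσ : σ < 1) :
    Tendsto (fun n : ℕ => (2 : ℝ) ^ n * ((2 : ℝ) ^ (n + 1)) ^ (-σ)) atTop atTop := by
  have h : (fun n : ℕ => (2 : ℝ) ^ n * ((2 : ℝ) ^ (n + 1)) ^ (-σ)) =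
      fun n : ℕ => (2 : ℝ) ^ (-σ) * ((2 : ℝ) ^ (1 - σ)) ^ n := by
    funext n
    rw [← Real.rpow_natCast, ← Real.rpow_natCast 2 (n + 1), ← Real.rpow_natCast _ n,
      ← Real.rpow_mul zero_le_two, ← Real.rpow_mul zero_le_two,
      ← Real.rpow_add zero_lt_two, ← Real.rpow_add zero_lt_two]
    congr 1
    push_cast
    ring
  rw [h]
  exact (tendsto_pow_atTop_atTop_of_one_lt
    (Real.one_lt_rpow one_lt_two (by linarith))).const_mul_atTop (by positivity)

theorem tendsto_sum_abs_sub_pred (hσ₀ : 0 ≤ σ) (hσ₁ : σ < 1) :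
    Tendsto (fun n : ℕ => ∑ j ∈ Finset.Icc ((2 : ℤ) ^ n) (2 ^ (n + 1) - 1),
      |alternatingPowerSeq σ j - alternatingPowerSeq σ (j - 1)|) atTop atTop :=
  tendsto_atTop_mono (two_pow_mul_rpow_neg_le_sum_abs_sub_pred hσ₀)
    (tendsto_two_pow_mul_rpow_neg hσ₁)

end alternatingPowerSeq

/-- for `1 < τ < ∞`, `τ ≠ 2`, `σ = |τ-2|/(2τ)`, and the sequence
`λ_0 = 0`, `λ_{±k} = (-1)^k k^{-σ}`: (a) the restriction of `λ` to each dyadic block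
`δ_k` has `ℓ_{2τ/|2-τ|,∞}` norm bounded by a constant; (b) the Marcinkiewicz variation
`sup_{n} Σ_{k=2^n}^{2^{n+1}-1} |λ_k - λ_{k-1}|` is infinite. -/
theorem example_hormander_not_marcinkiewicz (τ : ℝ) (hτ1 : 1 < τ) (hτ2 : τ ≠ 2)
    (σ : ℝ) (hσ : σ = |τ - 2| / (2 * τ)) (lam : ℤ → ℝ) (h0 : lam 0 = 0)
    (hval : ∀ k : ℕ, 1 ≤ k →
      lam k = (-1 : ℝ) ^ k * (k : ℝ) ^ (-σ) ∧
      lam (-(k : ℤ)) = (-1 : ℝ) ^ k * (k : ℝ) ^ (-σ)) :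
    (∃ C : ℝ≥0∞, C ≠ ∞ ∧ ∀ k : ℕ,
        (⨆ (n : ℕ) (_ : 1 ≤ n), (n : ℝ≥0∞) ^ (|2 - τ| / (2 * τ)) *
            srearr (fun m => if m ∈ dyadicBlock k then lam m else 0) n) ≤ C) ∧
      ¬ ∃ B : ℝ, ∀ n : ℕ,
          ∑ k ∈ Finset.Icc ((2 : ℤ) ^ n) (2 ^ (n + 1) - 1), |lam k - lam (k - 1)| ≤ B := by
  have hτ : 0 < 2 * τ := by linarith
  have hσ₀ : 0 < σ := hσ ▸ div_pos (abs_pos.mpr (sub_ne_zero.mpr hτ2)) hτ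
  have hσ₁ : σ < 1 := by
    rw [hσ, div_lt_one hτ, abs_lt]
    constructor <;> linarith
  rw [abs_sub_comm, ← hσ, alternatingPowerSeq.eq_of_natCast hσ₀.ne' h0 hval]
  refine ⟨⟨ENNReal.ofReal (4 ^ σ), ENNReal.ofReal_ne_top,
    alternatingPowerSeq.iSup_rpow_mul_srearr_dyadicBlock_le hσ₀⟩, fun ⟨B, hB⟩ => ?_⟩
  obtain ⟨n, hn⟩ :=
    ((alternatingPowerSeq.tendsto_sum_abs_sub_pred hσ₀.le hσ₁).eventually_gt_atTop B).exists
  exact (hB n).not_gt hn
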